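/- Given any mixed strategy σ on A, there exists a utility function u for which σ is a strict correlated equilibrium (sCE) if and only if for all players i ∈ [n] and all pairs of σ-supported actions j, k ∈ A_i with j ≠ k, the conditionals satisfy σ_{ij} ≠ σ_{ik}. -/

import Mathlib

open scoped BigOperators

section Prelim

variable {n : ℕ}

/-- Joint action obtained from player `i`'s action `j` and the other players' actions `b`,
i.e. the joint action `(j, a_{-i})`. -/
def joinA {A : Fin n → Type*} (i : Fin n) (j : A i)
    (b : ∀ l : {l : Fin n // l ≠ i}, A l) : ∀ l, A l :=
  fun l => if h : l = i then h.symm ▸ j else b ⟨l, h⟩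

/-- The actions `a_{-i}` of all players other than `i` in the joint action `a`. -/
def restr {A : Fin n → Type*} (i : Fin n) (a : ∀ l, A l) :
    ∀ l : {l : Fin n // l ≠ i}, A l :=
  fun l => a l

/-- `σ` is a mixed strategy: nonnegative and sums to one. -/
def IsMixed {X : Type*} [Fintype X] (σ : X → ℝ) : Prop :=
  (∀ x, 0 ≤ σ x) ∧ ∑ x, σ x = 1

/-- Marginal probability `p_{ij}` that player `i` plays `j` under `σ`. -/
noncomputable def marg {A : Fin n → Type*} [∀ l, Fintype (A l)]
    (σ : (∀ l, A l) → ℝ) (i : Fin n) (j : A i) : ℝ :=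
  ∑ b : ∀ l : {l : Fin n // l ≠ i}, A l, σ (joinA i j b)

/-- Conditional distribution `σ_{ij}` over the other players' actions:
`σ_{ij}(a_{-i}) = σ(j, a_{-i}) / p_{ij}` if `p_{ij} > 0`, and the zero function otherwise. -/
noncomputable def condl {A : Fin n → Type*} [∀ l, Fintype (A l)]
    (σ : (∀ l, A l) → ℝ) (i : Fin n) (j : A i) :
    (∀ l : {l : Fin n // l ≠ i}, A l) → ℝ :=
  fun b => if 0 < marg σ i j then σ (joinA i j b) / marg σ i j else 0

/-- Euclidean norm `‖·‖₂` on `ℝ^X`. -/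
noncomputable def norm2 {X : Type*} [Fintype X] (f : X → ℝ) : ℝ :=
  Real.sqrt (∑ x, f x ^ 2)

/-- Euclidean inner product `⟨·,·⟩` on `ℝ^X`. -/
noncomputable def inner2 {X : Type*} [Fintype X] (f g : X → ℝ) : ℝ :=
  ∑ x, f x * g x

/-- The witness utility `w_i(j, a_{-i}) = σ_{ij}(a_{-i}) / ‖σ_{ij}‖₂` if `p_{ij} > 0`,
and `0` otherwise. -/
noncomputable def wit {A : Fin n → Type*} [∀ l, Fintype (A l)]
    (σ : (∀ l, A l) → ℝ) (i : Fin n) (a : ∀ l, A l) : ℝ :=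
  if 0 < marg σ i (a i) then condl σ i (a i) (restr i a) / norm2 (condl σ i (a i)) else 0

open Classical in
/-- `t_{ijk} = ‖σ_{ij}‖₂ - ⟨σ_{ij}, σ_{ik}⟩ / ‖σ_{ik}‖₂` if `σ_{ik} ≠ 0`,
and `t_{ijk} = ‖σ_{ij}‖₂` if `σ_{ik} = 0`. -/
noncomputable def tq {A : Fin n → Type*} [∀ l, Fintype (A l)]
    (σ : (∀ l, A l) → ℝ) (i : Fin n) (j k : A i) : ℝ :=
  if condl σ i k = 0 then norm2 (condl σ i j)
  else norm2 (condl σ i j) - inner2 (condl σ i j) (condl σ i k) / norm2 (condl σ i k)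

end Prelim

/-!
If `σ_{ij} = σ_{ik}`, the incentive constraints "`j` beats `k`" and "`k` beats `j`" have the
same weights and opposite payoff differences, so they cannot both be strict.

Conversely, let `u_i(j, ·)` be the unit vector `x_j = σ_{ij} / ‖σ_{ij}‖₂` (zero for
unsupported `j`). The gain of `j` over `k` is then
`⟨σ_{ij}, x_j - x_k⟩ = ‖σ_{ij}‖₂ ⟨x_j, x_j - x_k⟩ ≥ ‖σ_{ij}‖₂ ‖x_j - x_k‖₂² / 2`, since
`‖x_k‖₂ ≤ 1 = ‖x_j‖₂`. It is positive because distinct vectors with coordinate sum `1` have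
distinct normalizations.
-/

section Normalized

variable {X : Type*} [Fintype X]

noncomputable def normalized (f : X → ℝ) : X → ℝ :=
  fun x => f x / norm2 f

lemma sum_sq_eq_norm2_sq (f : X → ℝ) : ∑ x, f x ^ 2 = norm2 f ^ 2 :=
  (Real.sq_sqrt (Finset.sum_nonneg fun _ _ => sq_nonneg _)).symm

lemma sum_sq_pos {f : X → ℝ} (hf : f ≠ 0) : 0 < ∑ x, f x ^ 2 := by
  obtain ⟨x, hx⟩ := Function.ne_iff.mp hf
  exact Finset.sum_pos' (fun _ _ => sq_nonneg _) ⟨x, Finset.mem_univ x, sq_pos_of_ne_zero hx⟩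

lemma norm2_pos {f : X → ℝ} (hf : f ≠ 0) : 0 < norm2 f :=
  Real.sqrt_pos.mpr (sum_sq_pos hf)

lemma ne_zero_of_sum_eq_one {f : X → ℝ} (hf : ∑ x, f x = 1) : f ≠ 0 := by
  rintro rfl
  simp at hf

lemma sum_sq_normalized {f : X → ℝ} (hf : f ≠ 0) : ∑ x, normalized f x ^ 2 = 1 := by
  have hN := (norm2_pos hf).ne'
  simp only [normalized, div_pow, ← Finset.sum_div, sum_sq_eq_norm2_sq]
  exact div_self (pow_ne_zero 2 hN)

lemma sum_sq_normalized_le (f : X → ℝ) : ∑ x, normalized f x ^ 2 ≤ 1 := by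
  rcases eq_or_ne f 0 with rfl | hf
  · simp [normalized]
  · exact (sum_sq_normalized hf).le

lemma eq_of_normalized_eq {f g : X → ℝ} (hf : ∑ x, f x = 1) (hg : ∑ x, g x = 1)
    (h : normalized f = normalized g) : f = g := by
  have hNf := (norm2_pos (ne_zero_of_sum_eq_one hf)).ne'
  have hNg := (norm2_pos (ne_zero_of_sum_eq_one hg)).ne'
  -- the coordinates of `normalized f` sum to `1 / norm2 f`
  have hN : norm2 f = norm2 g := by
    have := congrArg (fun v : X → ℝ => ∑ x, v x) h
    simp only [normalized, ← Finset.sum_div, hf, hg] at this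
    exact inv_injective (by simpa using this)
  funext x
  have := congrFun h x
  simp only [normalized, hN] at this
  exact (div_left_inj' hNg).mp this

lemma sum_mul_sub_pos {u v : X → ℝ} (hv : ∑ x, v x ^ 2 ≤ ∑ x, u x ^ 2) (hne : u ≠ v) :
    0 < ∑ x, u x * (u x - v x) := by
  have hgap : 0 < ∑ x, (u x - v x) ^ 2 :=
    sum_sq_pos (f := u - v) (sub_ne_zero.mpr hne)
  have hexpand : 2 * ∑ x, u x * (u x - v x)
      = ∑ x, (u x - v x) ^ 2 + (∑ x, u x ^ 2 - ∑ x, v x ^ 2) := by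
    simp only [Finset.mul_sum, ← Finset.sum_sub_distrib, ← Finset.sum_add_distrib]
    exact Finset.sum_congr rfl fun x _ => by ring
  linarith

lemma sum_mul_sub_normalized_pos {f g : X → ℝ} (hf : ∑ x, f x = 1)
    (hg : ∑ x, g x = 1 ∨ g = 0) (hne : f ≠ g) :
    0 < ∑ x, f x * (normalized f x - normalized g x) := by
  have hf0 := ne_zero_of_sum_eq_one hf
  have hN := norm2_pos hf0
  have hsep : normalized f ≠ normalized g := by
    rcases hg with hg | rfl
    · exact fun h => hne (eq_of_normalized_eq hf hg h)
    · intro h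
      have := sum_sq_normalized hf0
      rw [h] at this
      simp [normalized] at this
  have hscale : ∑ x, f x * (normalized f x - normalized g x)
      = norm2 f * ∑ x, normalized f x * (normalized f x - normalized g x) := by
    rw [Finset.mul_sum]
    refine Finset.sum_congr rfl fun x _ => ?_
    simp only [normalized]
    field_simp
  rw [hscale]
  exact mul_pos hN <| sum_mul_sub_pos
    ((sum_sq_normalized_le g).trans_eq (sum_sq_normalized hf0).symm) hsep

end Normalized

section Game

variable {n : ℕ} {A : Fin n → Type*}

lemma joinA_self (i : Fin n) (j : A i) (b : ∀ l : {l : Fin n // l ≠ i}, A l) :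
    joinA i j b i = j := by
  simp [joinA]

lemma restr_joinA (i : Fin n) (j : A i) (b : ∀ l : {l : Fin n // l ≠ i}, A l) :
    restr i (joinA i j b) = b := by
  funext l
  simp [restr, joinA, l.2]

variable [∀ l, Fintype (A l)] (σ : (∀ l, A l) → ℝ) {i : Fin n}

lemma sum_condl {j : A i} (hj : 0 < marg σ i j) : ∑ b, condl σ i j b = 1 := by
  simp only [condl, if_pos hj, ← Finset.sum_div]
  exact div_self hj.ne'

lemma condl_eq_zero {j : A i} (hj : ¬ 0 < marg σ i j) : condl σ i j = 0 := by
  funext b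
  simp [condl, hj]

lemma sum_condl_eq_one_or_eq_zero (j : A i) : ∑ b, condl σ i j b = 1 ∨ condl σ i j = 0 := by
  by_cases hj : 0 < marg σ i j
  · exact .inl (sum_condl σ hj)
  · exact .inr (condl_eq_zero σ hj)

lemma wit_joinA (j : A i) (b : ∀ l : {l : Fin n // l ≠ i}, A l) :
    wit σ i (joinA i j b) = normalized (condl σ i j) b := by
  by_cases hj : 0 < marg σ i j
  · simp [wit, normalized, joinA_self, restr_joinA, hj]
  · simp [wit, normalized, joinA_self, hj, condl_eq_zero σ hj]

end Game

theorem sCE_installable_iff_general {n : ℕ} {A : Fin n → Type*}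
    [∀ l, Fintype (A l)]
    (σ : (∀ l, A l) → ℝ) :
    (∃ u : Fin n → (∀ l, A l) → ℝ,
      ∀ i : Fin n, ∀ j : A i, 0 < marg σ i j → ∀ k : A i, k ≠ j →
        0 < ∑ b : ∀ l : {l : Fin n // l ≠ i}, A l,
              condl σ i j b * (u i (joinA i j b) - u i (joinA i k b))) ↔
      (∀ i : Fin n, ∀ j k : A i, 0 < marg σ i j → 0 < marg σ i k → j ≠ k →
        condl σ i j ≠ condl σ i k) := by
  constructor
  · rintro ⟨u, hu⟩ i j k hj hk hjk hcond
    have hjk_gain := hu i j hj k hjk.symm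
    have hkj_gain := hu i k hk j hjk
    rw [hcond] at hjk_gain
    have hopp : ∑ b, condl σ i k b * (u i (joinA i j b) - u i (joinA i k b))
        = -∑ b, condl σ i k b * (u i (joinA i k b) - u i (joinA i j b)) := by
      rw [← Finset.sum_neg_distrib]
      exact Finset.sum_congr rfl fun b _ => by ring
    linarith
  · intro hdist
    refine ⟨wit σ, fun i j hj k hkj => ?_⟩
    simp only [wit_joinA]
    refine sum_mul_sub_normalized_pos (sum_condl σ hj) (sum_condl_eq_one_or_eq_zero σ k) ?_
    intro hjk
    have hk : 0 < marg σ i k := by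
      by_contra hk
      exact ne_zero_of_sum_eq_one (sum_condl σ hj) (hjk.trans (condl_eq_zero σ hk))
    exact hdist i j k hj hk hkj.symm hjk

/-- **sCE installability (Theorem `sCE`).** A mixed strategy `σ` is strictly
CE-installable iff for every player `i` and all pairs of `σ`-supported actions `j ≠ k`,
the conditionals differ: `σ_{ij} ≠ σ_{ik}`. -/
theorem sCE_installable_iff {n : ℕ} {A : Fin n → Type*}
    [∀ l, Fintype (A l)] [∀ l, Nonempty (A l)]
    (σ : (∀ l, A l) → ℝ) (hσ : IsMixed σ) :
    (∃ u : Fin n → (∀ l, A l) → ℝ,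
      ∀ i : Fin n, ∀ j : A i, 0 < marg σ i j → ∀ k : A i, k ≠ j →
        0 < ∑ b : ∀ l : {l : Fin n // l ≠ i}, A l,
              condl σ i j b * (u i (joinA i j b) - u i (joinA i k b))) ↔
      (∀ i : Fin n, ∀ j k : A i, 0 < marg σ i j → 0 < marg σ i k → j ≠ k →
        condl σ i j ≠ condl σ i k) :=
  sCE_installable_iff_general σ
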